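/- arXiv:1701.01165 — 2 statements merged into one kernel-verified Lean document; each statement's English description precedes it below -/
import Mathlib

section
/- Given a measurable L-Lipschitz concave function λ: H → ℝ and ε_n = 1/n, for each n there exists a measurable selection p^n: H → H with ‖p^n(z)‖ ≤ L such that -⟨z, p^n(z)⟩ - λ_*(p^n(z)) - 1/n ≤ λ(z) for all z, where λ_* is the concave conjugate. -/
/-!
A continuous concave function has a supergradient at every point (Hahn–Banach separation of the
point `(x, f x)` from the open convex strict hypograph), and `L`-Lipschitz continuity bounds its
norm by `L`. A supergradient at `y` is a `2Lδ`-supergradient at every `x` within `δ` of `y`, so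
choosing supergradients along a dense sequence and sending `z` to the first sequence point within
`δ` of it gives a countably-valued, hence measurable, approximate selection. By Riesz
representation this is exactly the `1/n`-optimality in the concave conjugate for
`δ = 1 / (2 (L + 1) n)`.
-/

open Set TopologicalSpace

theorem ConcaveOn.exists_le_add_strongDual {E : Type*} [AddCommGroup E] [Module ℝ E]
    [TopologicalSpace E] [IsTopologicalAddGroup E] [ContinuousSMul ℝ E] {f : E → ℝ}
    (hf : ConcaveOn ℝ univ f) (hcont : Continuous f) (x : E) :
    ∃ φ : StrongDual ℝ E, ∀ y, f y ≤ f x + φ (y - x) := by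
  have hopen : IsOpen {p : E × ℝ | p.1 ∈ univ ∧ p.2 < f p.1} := by
    simpa using isOpen_lt continuous_snd (hcont.comp continuous_fst)
  obtain ⟨ψ, hψ⟩ := geometric_hahn_banach_open_point hf.convex_strict_hypograph hopen
    (x := (x, f x)) (by simp)
  set φ : StrongDual ℝ E := ψ.comp (ContinuousLinearMap.inl ℝ E ℝ)
  set c : ℝ := ψ (0, 1)
  have hsplit : ∀ y t, ψ (y, t) = φ y + t * c := fun y t => by
    rw [show (y, t) = (y, (0 : ℝ)) + t • ((0 : E), (1 : ℝ)) by simp, map_add, map_smul]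
    simp [φ, c, smul_eq_mul]
  have hsep : ∀ y t, t < f y → φ y + t * c < φ x + f x * c := fun y t ht => by
    simpa only [hsplit] using hψ (y, t) ⟨mem_univ y, ht⟩
  have hc : 0 < c := by nlinarith [hsep x (f x - 1) (by linarith)]
  have hsep_le : ∀ y, φ y + f y * c ≤ φ x + f x * c := fun y =>
    le_of_forall_pos_le_add fun ε hε => by
      have := hsep y (f y - ε / c) (by linarith [div_pos hε hc])
      rw [sub_mul, div_mul_cancel₀ ε hc.ne'] at this
      linarith
  refine ⟨-c⁻¹ • φ, fun y => ?_⟩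
  have hy : (φ y - φ x) / c ≤ f x - f y := by
    rw [div_le_iff₀ hc]; linarith [hsep_le y]
  simp only [smul_apply, map_sub, smul_eq_mul] at hy ⊢
  rw [div_eq_inv_mul] at hy
  linarith

theorem norm_le_of_le_add_strongDual {E : Type*} [SeminormedAddCommGroup E] [NormedSpace ℝ E]
    {f : E → ℝ} {L : ℝ} (hL : 0 ≤ L) (hLip : ∀ y y', |f y - f y'| ≤ L * ‖y - y'‖)
    {φ : StrongDual ℝ E} {x : E} (hφ : ∀ y, f y ≤ f x + φ (y - x)) : ‖φ‖ ≤ L := by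
  have hup : ∀ v, φ v ≤ L * ‖v‖ := fun v => by
    have h1 := hφ (x - v)
    have h2 := (le_abs_self _).trans (hLip x (x - v))
    simp only [sub_sub_cancel_left, map_neg, sub_sub_cancel] at h1 h2
    linarith
  refine φ.opNorm_le_bound hL fun v => abs_le.2 ⟨?_, hup v⟩
  have := hup (-v)
  rw [map_neg, norm_neg] at this
  linarith

theorem le_add_strongDual_of_dist_le {E : Type*} [SeminormedAddCommGroup E] [NormedSpace ℝ E]
    {f : E → ℝ} {L δ : ℝ} (hLip : ∀ y y', |f y - f y'| ≤ L * ‖y - y'‖)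
    {φ : StrongDual ℝ E} (hφL : ‖φ‖ ≤ L) {x y : E}
    (hφ : ∀ w, f w ≤ f y + φ (w - y)) (hxy : dist x y ≤ δ) (w : E) :
    f w ≤ f x + φ (w - x) + 2 * L * δ := by
  rw [dist_eq_norm] at hxy
  have hfy : f y - f x ≤ L * δ := calc
    f y - f x ≤ L * ‖y - x‖ := (le_abs_self _).trans (hLip y x)
    _ ≤ L * δ := by
      rw [norm_sub_rev]; exact mul_le_mul_of_nonneg_left hxy ((norm_nonneg φ).trans hφL)
  have hφxy : φ (x - y) ≤ L * δ := calc
    φ (x - y) ≤ ‖φ‖ * ‖x - y‖ := (le_abs_self _).trans (φ.le_opNorm _)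
    _ ≤ L * δ := mul_le_mul hφL hxy (norm_nonneg _) ((norm_nonneg φ).trans hφL)
  have := hφ w
  rw [show w - y = (w - x) + (x - y) by abel, map_add] at this
  linarith

theorem exists_measurable_index_dist_lt {α : Type*} [PseudoMetricSpace α] [SeparableSpace α]
    [Nonempty α] [MeasurableSpace α] [OpensMeasurableSpace α] {δ : ℝ} (hδ : 0 < δ) :
    ∃ (u : ℕ → α) (k : α → ℕ), Measurable k ∧ ∀ x, dist x (u (k x)) < δ := by
  classical
  have hex : ∀ x, ∃ i, dist x (denseSeq α i) < δ := fun x =>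
    (denseRange_denseSeq α).exists_dist_lt x hδ
  exact ⟨denseSeq α, fun x => Nat.find (hex x),
    measurable_find hex fun i => measurableSet_lt (measurable_id.dist measurable_const)
      measurable_const,
    fun x => Nat.find_spec (hex x)⟩

/-- Measurable `1/n`-optimal selection for the concave-conjugate representation of an
`L`-Lipschitz concave function on a separable Hilbert space: there is a measurable
`p : H → H` with `‖p(z)‖ ≤ L` such that `-⟨z,p(z)⟩ - λ(z) - 1/n ≤ λ_*(p(z))`
(equivalently `-⟨z,p(z)⟩ - λ_*(p(z)) - 1/n ≤ λ(z)`). -/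
theorem stmt16 {H : Type*} [NormedAddCommGroup H] [InnerProductSpace ℝ H]
    [CompleteSpace H] [TopologicalSpace.SeparableSpace H]
    [MeasurableSpace H] [BorelSpace H]
    (L : ℝ) (hL : 0 ≤ L) (lam : H → ℝ) (hconc : ConcaveOn ℝ Set.univ lam)
    (hcont : Continuous lam) (hLip : ∀ z z', |lam z - lam z'| ≤ L * ‖z - z'‖)
    (lamStar : H → EReal)
    (hstar : ∀ p : H, lamStar p = ⨅ z : H, ((-(inner ℝ z p : ℝ) - lam z : ℝ) : EReal)) :
    ∀ n : ℕ, 0 < n → ∃ p : H → H, Measurable p ∧ (∀ z, ‖p z‖ ≤ L) ∧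
      ∀ z, ((-(inner ℝ z (p z) : ℝ) - lam z - 1/(n:ℝ) : ℝ) : EReal) ≤ lamStar (p z) := by
  intro n hn
  set δ : ℝ := 1 / (2 * (L + 1) * n)
  have hδ : 2 * L * δ ≤ 1 / n := by
    rw [mul_one_div, div_le_div_iff₀ (by positivity) (by positivity)]
    nlinarith
  obtain ⟨u, k, hk, hku⟩ := exists_measurable_index_dist_lt (α := H) (δ := δ) (by positivity)
  choose φ hφ using fun i => hconc.exists_le_add_strongDual hcont (u i)
  have hφL : ∀ i, ‖φ i‖ ≤ L := fun i => norm_le_of_le_add_strongDual hL hLip (hφ i)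
  set q : ℕ → H := fun i => (InnerProductSpace.toDual ℝ H).symm (φ i)
  refine ⟨fun z => -q (k z), (measurable_from_nat (f := q)).comp hk |>.neg,
    fun z => by simpa [q] using hφL (k z), fun z => ?_⟩
  rw [hstar]
  refine le_iInf fun w => EReal.coe_le_coe_iff.2 ?_
  have := le_add_strongDual_of_dist_le hLip (hφL (k z)) (hφ (k z)) (hku z).le w
  simp only [map_sub] at this
  simp only [inner_neg_right, neg_neg, real_inner_comm (q _), q,
    InnerProductSpace.toDual_symm_apply]
  linarith
end

section
/- Let f, f': [0,∞) → ℝ be absolutely continuous with f(0) = f'(0) and suppose ⟨f(s)-f'(s), d/ds(f(s)-f'(s))⟩ ≤ -μ|f(s)-f'(s)|² + |f(s)-f'(s)|·h(s) for a.e. s, with h ≥ 0 integrable. Then |f(T)-f'(T)| ≤ ∫₀^T e^{-μ(T-s)} h(s) ds. -/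
/-!
Regularise the norm: for `ε > 0`, `r = √(‖g‖² + ε²)` is differentiable with
`r' = ⟪g, g'⟫ / r ≤ ‖g‖ k / r ≤ k`, so `r b - r a ≤ ∫ k`, and `ε → 0` gives
`‖g b‖ ≤ ‖g a‖ + ∫ k` whenever `⟪g, g'⟫ ≤ ‖g‖ k` with `k ≥ 0`. The dissipative inequality
`⟪u, u'⟫ ≤ -μ‖u‖² + ‖u‖ h` becomes this one for `g = exp (μ s) • u` and `k = exp (μ s) h`.
-/

open MeasureTheory Set Real intervalIntegral
open scoped RealInnerProductSpace

section

variable {E : Type*} [NormedAddCommGroup E] [InnerProductSpace ℝ E]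
  {g g' : ℝ → E} {k : ℝ → ℝ} {a b : ℝ}

theorem sqrt_norm_sq_add_sq_sub_le_integral_of_inner_le (hab : a ≤ b) {ε : ℝ} (hε : 0 < ε)
    (hcont : ContinuousOn g (Icc a b))
    (hderiv : ∀ s ∈ Ioo a b, HasDerivWithinAt g (g' s) (Ioi s) s)
    (hk : IntegrableOn k (Icc a b)) (hk_nonneg : ∀ s ∈ Ioo a b, 0 ≤ k s)
    (hinner : ∀ s ∈ Ioo a b, ⟪g s, g' s⟫ ≤ ‖g s‖ * k s) :
    √(‖g b‖ ^ 2 + ε ^ 2) - √(‖g a‖ ^ 2 + ε ^ 2) ≤ ∫ s in a..b, k s := by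
  set r : ℝ → ℝ := fun s => √(‖g s‖ ^ 2 + ε ^ 2)
  have hpos : ∀ s, 0 < ‖g s‖ ^ 2 + ε ^ 2 := fun s => by positivity
  have hr_deriv : ∀ s ∈ Ioo a b,
      HasDerivWithinAt r (2 * ⟪g s, g' s⟫ / (2 * r s)) (Ioi s) s := fun s hs =>
    ((hderiv s hs).norm_sq.add_const (ε ^ 2)).sqrt (hpos s).ne'
  have hr_deriv_le : ∀ s ∈ Ioo a b, 2 * ⟪g s, g' s⟫ / (2 * r s) ≤ k s := by
    intro s hs
    have hnorm : ‖g s‖ ≤ r s := le_sqrt_of_sq_le (le_add_of_nonneg_right (sq_nonneg ε))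
    rw [mul_div_mul_left _ _ two_ne_zero, div_le_iff₀ (sqrt_pos.2 (hpos s))]
    exact (hinner s hs).trans (by nlinarith [hk_nonneg s hs])
  exact sub_le_integral_of_hasDeriv_right_of_le hab
    (hcont.norm.pow 2 |>.add continuousOn_const).sqrt hr_deriv hk hr_deriv_le

theorem norm_le_norm_add_integral_of_inner_le (hab : a ≤ b)
    (hcont : ContinuousOn g (Icc a b))
    (hderiv : ∀ s ∈ Ioo a b, HasDerivWithinAt g (g' s) (Ioi s) s)
    (hk : IntegrableOn k (Icc a b)) (hk_nonneg : ∀ s ∈ Ioo a b, 0 ≤ k s)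
    (hinner : ∀ s ∈ Ioo a b, ⟪g s, g' s⟫ ≤ ‖g s‖ * k s) :
    ‖g b‖ ≤ ‖g a‖ + ∫ s in a..b, k s := by
  refine le_of_forall_pos_le_add fun ε hε => ?_
  have hr := sqrt_norm_sq_add_sq_sub_le_integral_of_inner_le hab hε hcont hderiv hk hk_nonneg hinner
  have hb : ‖g b‖ ≤ √(‖g b‖ ^ 2 + ε ^ 2) :=
    le_sqrt_of_sq_le (le_add_of_nonneg_right (sq_nonneg ε))
  have ha : √(‖g a‖ ^ 2 + ε ^ 2) ≤ ‖g a‖ + ε :=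
    sqrt_le_iff.2 ⟨by positivity, by nlinarith [norm_nonneg (g a), hε.le]⟩
  linarith

theorem norm_le_exp_mul_norm_add_integral_of_inner_le (μ : ℝ) {u u' : ℝ → E} {h : ℝ → ℝ}
    (hab : a ≤ b) (hcont : ContinuousOn u (Icc a b))
    (hderiv : ∀ s ∈ Ioo a b, HasDerivWithinAt u (u' s) (Ioi s) s)
    (hh : IntegrableOn h (Icc a b)) (hh_nonneg : ∀ s ∈ Ioo a b, 0 ≤ h s)
    (hdiss : ∀ s ∈ Ioo a b, ⟪u s, u' s⟫ ≤ -μ * ‖u s‖ ^ 2 + ‖u s‖ * h s) :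
    ‖u b‖ ≤ exp (-μ * (b - a)) * ‖u a‖ + ∫ s in a..b, exp (-μ * (b - s)) * h s := by
  have hexp : ∀ s, HasDerivAt (fun s => exp (μ * s)) (exp (μ * s) * μ) s := fun s => by
    simpa using ((hasDerivAt_id s).const_mul μ).exp
  have hnorm : ∀ s, ‖exp (μ * s) • u s‖ = exp (μ * s) * ‖u s‖ := fun s => by
    rw [norm_smul, norm_of_nonneg (exp_pos _).le]
  have hweighted := norm_le_norm_add_integral_of_inner_le (g := fun s => exp (μ * s) • u s)
    (g' := fun s => exp (μ * s) • (μ • u s + u' s)) (k := fun s => exp (μ * s) * h s) hab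
    ((continuous_exp.comp (continuous_const_mul μ)).continuousOn.smul hcont)
    (fun s hs => ((hexp s).hasDerivWithinAt.smul (hderiv s hs)).congr_deriv (by
      rw [smul_add, smul_smul, add_comm]))
    (hh.continuousOn_mul (continuous_exp.comp (continuous_const_mul μ)).continuousOn isCompact_Icc)
    (fun s hs => mul_nonneg (exp_pos _).le (hh_nonneg s hs))
    (fun s hs => by
      simp only [hnorm, real_inner_smul_left, real_inner_smul_right, inner_add_right,
        real_inner_self_eq_norm_sq]
      nlinarith [mul_le_mul_of_nonneg_left (hdiss s hs) (sq_nonneg (exp (μ * s)))])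
  simp only [hnorm] at hweighted
  have hintegral : ∫ s in a..b, exp (-μ * (b - s)) * h s
      = exp (-μ * b) * ∫ s in a..b, exp (μ * s) * h s := by
    rw [← intervalIntegral.integral_const_mul]
    congr with s
    rw [← mul_assoc, ← exp_add]
    ring_nf
  calc ‖u b‖ = exp (-μ * b) * (exp (μ * b) * ‖u b‖) := by
        rw [← mul_assoc, ← exp_add]; simp
    _ ≤ exp (-μ * b) * (exp (μ * a) * ‖u a‖ + ∫ s in a..b, exp (μ * s) * h s) := by
        gcongr
    _ = exp (-μ * (b - a)) * ‖u a‖ + ∫ s in a..b, exp (-μ * (b - s)) * h s := by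
        rw [hintegral, mul_add, ← mul_assoc, ← exp_add]
        ring_nf

end

theorem stmt18_general (μ : ℝ) (f f' df df' h : ℝ → ℝ)
    (hf : ∀ s, HasDerivAt f (df s) s) (hf' : ∀ s, HasDerivAt f' (df' s) s)
    (h0 : f 0 = f' 0) (hh : ∀ s, 0 ≤ h s)
    (hhint : ∀ T : ℝ, IntervalIntegrable h MeasureTheory.volume 0 T)
    (hdiss : ∀ s ≥ (0:ℝ),
      (f s - f' s) * (df s - df' s) ≤ -μ * (f s - f' s)^2 + |f s - f' s| * h s) :
    ∀ T ≥ (0:ℝ), |f T - f' T| ≤ ∫ s in (0:ℝ)..T, Real.exp (-μ*(T-s)) * h s := by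
  intro T hT
  have hderiv : ∀ s, HasDerivAt (fun s => f s - f' s) (df s - df' s) s :=
    fun s => (hf s).sub (hf' s)
  have hbound := norm_le_exp_mul_norm_add_integral_of_inner_le μ hT
    (fun s _ => (hderiv s).continuousAt.continuousWithinAt)
    (fun s _ => (hderiv s).hasDerivWithinAt)
    ((intervalIntegrable_iff_integrableOn_Icc_of_le hT).1 (hhint T)) (fun s _ => hh s)
    (fun s hs => by
      simpa only [Real.inner_apply, Real.norm_eq_abs, sq_abs] using hdiss s hs.1.le)
  simpa only [Real.norm_eq_abs, h0, sub_self, abs_zero, mul_zero, zero_add] using hbound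

/-- Deterministic dissipativity comparison at the core of Lemma 3.2's proof. -/
theorem stmt18 (μ : ℝ) (hμ : 0 < μ) (f f' df df' h : ℝ → ℝ)
    (hf : ∀ s, HasDerivAt f (df s) s) (hf' : ∀ s, HasDerivAt f' (df' s) s)
    (h0 : f 0 = f' 0) (hh : ∀ s, 0 ≤ h s)
    (hhint : ∀ T : ℝ, IntervalIntegrable h MeasureTheory.volume 0 T)
    (hdiss : ∀ s ≥ (0:ℝ),
      (f s - f' s) * (df s - df' s) ≤ -μ * (f s - f' s)^2 + |f s - f' s| * h s) :
    ∀ T ≥ (0:ℝ), |f T - f' T| ≤ ∫ s in (0:ℝ)..T, Real.exp (-μ*(T-s)) * h s :=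
  stmt18_general μ f f' df df' h hf hf' h0 hh hhint hdiss
end
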